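/- Let K ⊂ ℝ² be a rotation- and reflection-free self-similar set with π(K) ⊂ [0,1], min π(K) = 0, and suppose the vertical line π⁻¹{0} meets only one of the first-generation sets ψ_j(K), say ψ_l(K). Then there exists κ > 0 such that for every k ≥ 1, the strip π⁻¹[0, ρ_l^{k−1} κ] intersects exactly one generation-k cylinder, namely K_{l^k} = ψ_l^{∘k}(K). -/

import Mathlib

open MeasureTheory Metric Set
open scoped ENNReal

/-- The δ-approximate s-dimensional packing premeasure: the supremum of `∑ (diam Bᵢ)^s`
over finite disjoint collections of closed balls of diameter at most δ centred in `A`. -/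
noncomputable def prepack {X : Type*} [PseudoMetricSpace X] (s δ : ℝ) (A : Set X) : ℝ≥0∞ :=
  ⨆ (n : ℕ) (c : Fin n → X) (r : Fin n → ℝ)
    (_ : ∀ i, c i ∈ A ∧ 0 < r i ∧ 2 * r i ≤ δ)
    (_ : Pairwise fun i j => Disjoint (closedBall (c i) (r i)) (closedBall (c j) (r j))),
    ∑ i, ENNReal.ofReal ((2 * r i) ^ s)

/-- The s-dimensional packing premeasure `P^s(A) = lim_{δ → 0} P^s_δ(A)`. -/
noncomputable def packPre {X : Type*} [PseudoMetricSpace X] (s : ℝ) (A : Set X) : ℝ≥0∞ :=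
  ⨅ (δ : ℝ) (_ : 0 < δ), prepack s δ A

/-- The s-dimensional packing measure `𝒫^s(A) = inf { ∑ P^s(Aᵢ) : A ⊆ ⋃ Aᵢ }`. -/
noncomputable def packMeasure {X : Type*} [PseudoMetricSpace X] (s : ℝ) (A : Set X) : ℝ≥0∞ :=
  ⨅ (f : ℕ → Set X) (_ : A ⊆ ⋃ n, f n), ∑' n, packPre s (f n)

/-- The packing dimension. -/
noncomputable def packDim {X : Type*} [PseudoMetricSpace X] (A : Set X) : ℝ :=
  sInf {s : ℝ | 0 ≤ s ∧ packMeasure s A = 0}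

/-- The composition `ψ_{ω₁} ∘ ⋯ ∘ ψ_{ω_n}` associated to a finite word ω. -/
def wordMap {q : ℕ} {X : Type*} (ψ : Fin q → X → X) (ω : List (Fin q)) : X → X :=
  ω.foldr (fun j f => ψ j ∘ f) id

/-- The contraction ratio `ρ_{ω₁} ⋯ ρ_{ω_n}` associated to a finite word ω. -/
def wordRatio {q : ℕ} (ρ : Fin q → ℝ) (ω : List (Fin q)) : ℝ := (ω.map ρ).prod

/-!
The first coordinate transforms affinely, `π (ψ_j x) = ρ_j π x + (w_j).1`. If `x₀ ∈ K` lies on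
the line `π = 0`, then `π (ψ_j x₀) = (w_j).1`, so the hypotheses force `(w_l).1 = 0` and
`(w_j).1 > 0` for `j ≠ l`; take `0 < κ < min_{j ≠ l} (w_j).1`. A word `l^m j ω'` of length `k`
with `j ≠ l` maps `K` into `π ≥ ρ_l^m (w_j).1 > ρ_l^m κ ≥ ρ_l^{k-1} κ`, while `ψ_l^k x₀` stays
on the line `π = 0`.
-/

theorem exists_pos_forall_lt_of_pos {ι : Type*} [Finite ι] {p : ι → Prop} {f : ι → ℝ}
    (hf : ∀ i, p i → 0 < f i) : ∃ κ > 0, ∀ i, p i → κ < f i :=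
  (Filter.Eventually.and (self_mem_nhdsWithin (a := 0) (s := Ioi 0))
    (Filter.eventually_all.2 fun i => Filter.eventually_imp_distrib_left.2 fun hi =>
      nhdsWithin_le_nhds (eventually_lt_nhds (hf i hi)))).exists

section AffineProjection

variable {q : ℕ} {X : Type*} {ψ : Fin q → X → X} {π : X → ℝ} {ρ c : Fin q → ℝ} {l : Fin q}

theorem mapsTo_wordMap {s : Set X} (hs : ∀ j, MapsTo (ψ j) s s) :
    ∀ ω : List (Fin q), MapsTo (wordMap ψ ω) s s
  | [] => mapsTo_id s
  | j :: ω => (hs j).comp (mapsTo_wordMap hs ω)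

theorem apply_wordMap_replicate (hψ : ∀ j x, π (ψ j x) = ρ j * π x + c j) (hcl : c l = 0)
    (k : ℕ) (x : X) : π (wordMap ψ (List.replicate k l) x) = ρ l ^ k * π x := by
  induction k with
  | zero => simp [wordMap]
  | succ k ih =>
    change π (ψ l (wordMap ψ (List.replicate k l) x)) = _
    rw [hψ, ih, hcl, pow_succ]
    ring

theorem lt_apply_wordMap_of_ne_replicate {s : Set X} {κ : ℝ}
    (hs : ∀ j, MapsTo (ψ j) s s) (hπs : ∀ x ∈ s, 0 ≤ π x)
    (hψ : ∀ j x, π (ψ j x) = ρ j * π x + c j) (hρ : ∀ j, 0 ≤ ρ j) (hρl₀ : 0 < ρ l)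
    (hρl₁ : ρ l ≤ 1) (hcl : c l = 0) (hκ : 0 ≤ κ) (hκc : ∀ j, j ≠ l → κ < c j)
    (ω : List (Fin q)) (hω : ω ≠ List.replicate ω.length l) {x : X} (hx : x ∈ s) :
    ρ l ^ (ω.length - 1) * κ < π (wordMap ψ ω x) := by
  induction ω with
  | nil => exact absurd rfl hω
  | cons j ω ih =>
    change _ < π (ψ j (wordMap ψ ω x))
    have hy : 0 ≤ π (wordMap ψ ω x) := hπs _ (mapsTo_wordMap hs ω hx)
    rw [hψ, List.length_cons, Nat.add_sub_cancel]
    by_cases hj : j = l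
    · subst hj
      have hω' : ω ≠ List.replicate ω.length j := fun h =>
        hω (by rw [List.length_cons, List.replicate_succ, ← h])
      obtain ⟨n, hn⟩ : ∃ n, ω.length = n + 1 :=
        Nat.exists_eq_succ_of_ne_zero fun h => hω' (by simp [List.length_eq_zero_iff.1 h])
      have ih := ih hω'
      rw [hn, Nat.add_sub_cancel] at ih
      rw [hn, hcl, add_zero, pow_succ', mul_assoc]
      exact mul_lt_mul_of_pos_left ih hρl₀
    · calc ρ l ^ ω.length * κ ≤ κ := mul_le_of_le_one_left hκ (pow_le_one₀ hρl₀.le hρl₁)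
        _ < ρ j * π (wordMap ψ ω x) + c j := by linarith [hκc j hj, mul_nonneg (hρ j) hy]

end AffineProjection

theorem strip_meets_unique_cylinder_general (q : ℕ) (ρ : Fin q → ℝ) (w : Fin q → ℝ × ℝ)
    (hρ : ∀ j, ρ j ∈ Set.Ioo (0:ℝ) 1)
    (ψ : Fin q → (ℝ × ℝ) → (ℝ × ℝ)) (hψ : ∀ j x, ψ j x = ρ j • x + w j)
    (K : Set (ℝ × ℝ))
    (hinv : K = ⋃ j, ψ j '' K)
    (hmin : IsLeast (Prod.fst '' K) 0)
    (l : Fin q)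
    (hl : ((ψ l '' K) ∩ Prod.fst ⁻¹' {(0:ℝ)}).Nonempty)
    (hl' : ∀ j, ((ψ j '' K) ∩ Prod.fst ⁻¹' {(0:ℝ)}).Nonempty → j = l) :
    ∃ κ > (0:ℝ), ∀ k : ℕ, 1 ≤ k → ∀ ω : List (Fin q), ω.length = k →
      (((wordMap ψ ω '' K) ∩ Prod.fst ⁻¹' Set.Icc 0 (ρ l ^ (k - 1) * κ)).Nonempty ↔
        ω = List.replicate k l) := by
  obtain ⟨x₀, hx₀K, hx₀⟩ := hmin.1
  have hK : ∀ x ∈ K, 0 ≤ x.1 := fun x hx => hmin.2 ⟨x, hx, rfl⟩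
  have hmaps : ∀ j, MapsTo (ψ j) K K := fun j x hx => hinv ▸ mem_iUnion.2 ⟨j, x, hx, rfl⟩
  have hfst : ∀ j x, (ψ j x).1 = ρ j * x.1 + (w j).1 := by simp [hψ]
  have hwx₀ : ∀ j, (ψ j x₀).1 = (w j).1 := by simp [hfst, hx₀]
  have hw₀ : ∀ j, 0 ≤ (w j).1 := fun j => hwx₀ j ▸ hK _ (hmaps j hx₀K)
  have hwl : (w l).1 = 0 := by
    obtain ⟨_, ⟨y, hy, rfl⟩, hy0 : (ψ l y).1 = 0⟩ := hl
    rw [hfst] at hy0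
    linarith [hw₀ l, mul_nonneg (hρ l).1.le (hK y hy)]
  have hw : ∀ j, j ≠ l → 0 < (w j).1 := fun j hj =>
    (hw₀ j).lt_of_ne' fun h => hj (hl' j ⟨_, ⟨x₀, hx₀K, rfl⟩, (hwx₀ j).trans h⟩)
  obtain ⟨κ, hκ, hκw⟩ := exists_pos_forall_lt_of_pos hw
  refine ⟨κ, hκ, fun k _ ω hω => ⟨fun hne => ?_, ?_⟩⟩
  · by_contra hne'
    obtain ⟨_, ⟨x, hx, rfl⟩, hxs⟩ := hne
    subst hω
    exact (lt_apply_wordMap_of_ne_replicate hmaps hK hfst (fun j => (hρ j).1.le) (hρ l).1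
      (hρ l).2.le hwl hκ.le hκw ω hne' hx).not_ge hxs.2
  · rintro rfl
    refine ⟨_, mem_image_of_mem _ hx₀K, ?_⟩
    rw [mem_preimage, apply_wordMap_replicate hfst hwl, hx₀, mul_zero]
    exact ⟨le_rfl, mul_nonneg (pow_nonneg (hρ l).1.le _) hκ.le⟩

/-- If the fiber over `min π(K) = 0` meets only the first-generation piece
`ψ_l(K)`, then there is `κ > 0` such that for every `k ≥ 1` the strip
`π⁻¹[0, ρ_l^{k-1}κ]` intersects exactly one generation-`k` cylinder, namely `K_{l^k}`. -/
theorem strip_meets_unique_cylinder (q : ℕ) (ρ : Fin q → ℝ) (w : Fin q → ℝ × ℝ)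
    (hρ : ∀ j, ρ j ∈ Set.Ioo (0:ℝ) 1)
    (ψ : Fin q → (ℝ × ℝ) → (ℝ × ℝ)) (hψ : ∀ j x, ψ j x = ρ j • x + w j)
    (K : Set (ℝ × ℝ)) (hKc : IsCompact K) (hKne : K.Nonempty)
    (hinv : K = ⋃ j, ψ j '' K)
    (hsep : Pairwise fun i j => Disjoint (ψ i '' K) (ψ j '' K))
    (hπK : Prod.fst '' K ⊆ Set.Icc (0:ℝ) 1)
    (hmin : IsLeast (Prod.fst '' K) 0)
    (l : Fin q)
    (hl : ((ψ l '' K) ∩ Prod.fst ⁻¹' {(0:ℝ)}).Nonempty)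
    (hl' : ∀ j, ((ψ j '' K) ∩ Prod.fst ⁻¹' {(0:ℝ)}).Nonempty → j = l) :
    ∃ κ > (0:ℝ), ∀ k : ℕ, 1 ≤ k → ∀ ω : List (Fin q), ω.length = k →
      (((wordMap ψ ω '' K) ∩ Prod.fst ⁻¹' Set.Icc 0 (ρ l ^ (k - 1) * κ)).Nonempty ↔
        ω = List.replicate k l) :=
  strip_meets_unique_cylinder_general q ρ w hρ ψ hψ K hinv hmin l hl hl'
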